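/- arXiv:1503.01641 — 5 statements merged into one kernel-verified Lean document; each statement's English description precedes it below -/
import Mathlib

section
/- For every ε with 0 < ε < 1/4 and every L_max > ε', where ε' = √3·α₀·ε^{3/2}/(1−ε)^{1/2}, there exists a function S̃ defined on the region R = (0,1)×[0,L_max] \ (1−ε,1)×[0,ε'] that takes only finitely many values (a piecewise constant function) and such that for every (g,L) ∈ R, the value S̃(g,L) is an approximate zero of f_{g,L}. -/
/-!
Every `(g, L)` with `g ≤ 1`, `L ≥ 0` and `(g, L) ≠ (1, 0)` has a root `z` of `f_{g,L}` at which
`f'_{g,L}(z) = 1 - g / √(1 + z²)` does not vanish. Since `arsinh` is analytic, its Taylor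
coefficients at `z` grow at most geometrically, so `γ(f_{g',L'}, z)` stays bounded for `(g', L')`
near `(g, L)` while `β(f_{g',L'}, z) → 0`: the single point `z` is an approximate zero on a whole
neighbourhood of `(g, L)`. The region is contained in a compact set avoiding `(1, 0)`, which
finitely many such neighbourhoods cover.
-/

noncomputable section

/-- The hyperbolic Kepler function `f_{g,L}(S) = S - g·arcsinh(S) - L`. -/
def fhk (g L : ℝ) : ℝ → ℝ := fun S => S - g * Real.arsinh S - L

/-- `β(f,z) = |f(z)/f'(z)|`. -/
def betaFn (f : ℝ → ℝ) (z : ℝ) : ℝ := |f z / deriv f z|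

/-- `γ(f,z) = sup_{k ≥ 2} |f^{(k)}(z)/(k!·f'(z))|^{1/(k-1)}`. -/
def gammaFn (f : ℝ → ℝ) (z : ℝ) : ℝ :=
  sSup {y : ℝ | ∃ k : ℕ, 2 ≤ k ∧
    y = |iteratedDeriv k f z / (Nat.factorial k * deriv f z)| ^ ((1 : ℝ) / ((k : ℝ) - 1))}

/-- `α(f,z) = β(f,z)·γ(f,z)`. -/
def alphaFn (f : ℝ → ℝ) (z : ℝ) : ℝ := betaFn f z * gammaFn f z

/-- Smale's constant (improved by Wang–Han): `α₀ = 3 - 2√2`. -/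
def alpha0 : ℝ := 3 - 2 * Real.sqrt 2

/-- `z` is an approximate zero of `f` when `α(f,z) < α₀`. -/
def ApproxZero (f : ℝ → ℝ) (z : ℝ) : Prop := alphaFn f z < alpha0

open Real Set Filter Topology
open scoped Nat

theorem IsCompact.exists_finite_image_of_locally {X Y : Type*} [TopologicalSpace X] [Nonempty Y]
    {K : Set X} (hK : IsCompact K) {P : X → Y → Prop}
    (h : ∀ x ∈ K, ∃ y, ∀ᶠ x' in 𝓝 x, P x' y) :
    ∃ S : X → Y, (S '' K).Finite ∧ ∀ x ∈ K, P x (S x) := by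
  choose! y hy using h
  obtain ⟨t, -, hcover⟩ := hK.elim_nhds_subcover (fun x => {x' | P x' (y x)}) hy
  set S : X → Y := fun x => Classical.epsilon fun v => v ∈ y '' t ∧ P x v
  have hS : ∀ x ∈ K, S x ∈ y '' t ∧ P x (S x) := fun x hx => by
    obtain ⟨c, hc, hxc⟩ := mem_iUnion₂.mp (hcover hx)
    exact Classical.epsilon_spec (p := fun v => v ∈ y '' t ∧ P x v)
      ⟨y c, mem_image_of_mem y hc, hxc⟩
  exact ⟨S, (t.finite_toSet.image y).subset (image_subset_iff.mpr fun x hx => (hS x hx).1),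
    fun x hx => (hS x hx).2⟩

theorem AnalyticAt.exists_norm_iteratedDeriv_div_factorial_le {𝕜 : Type*}
    [NontriviallyNormedField 𝕜] [CompleteSpace 𝕜] [CharZero 𝕜] {f : 𝕜 → 𝕜} {x : 𝕜}
    (hf : AnalyticAt 𝕜 f x) :
    ∃ C B : ℝ, 0 < C ∧ 0 < B ∧ ∀ n, ‖iteratedDeriv n f x / (n ! : 𝕜)‖ ≤ C * B ^ n := by
  obtain ⟨C, B, hC, hB, hbound⟩ :=
    FormalMultilinearSeries.le_mul_pow_of_radius_pos _ hf.hasFPowerSeriesAt.radius_pos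
  exact ⟨C, B, hC, hB, fun n => by simpa [FormalMultilinearSeries.ofScalars_norm] using hbound n⟩

theorem gammaFn_le_of_forall_le {f : ℝ → ℝ} {z C B : ℝ} (hC : 0 ≤ C) (hB : 0 ≤ B)
    (h : ∀ k, 2 ≤ k → |iteratedDeriv k f z / (k ! * deriv f z)| ≤ C * B ^ (k - 1)) :
    gammaFn f z ≤ B * max 1 C := by
  refine Real.sSup_le ?_ (by positivity)
  rintro _ ⟨k, hk, rfl⟩
  obtain ⟨m, rfl⟩ : ∃ m, k = m + 1 := ⟨k - 1, by omega⟩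
  have hm : m ≠ 0 := by omega
  have hexp : (1 : ℝ) / (((m + 1 : ℕ) : ℝ) - 1) = (m : ℝ)⁻¹ := by push_cast; ring
  have hCroot : C ^ (m : ℝ)⁻¹ ≤ max 1 C := by
    rcases le_total C 1 with hC1 | hC1
    · exact le_max_of_le_left (rpow_le_one hC hC1 (by positivity))
    · have hm1 : (1 : ℝ) ≤ m := by exact_mod_cast Nat.one_le_iff_ne_zero.mpr hm
      exact le_max_of_le_right (rpow_le_self_of_one_le hC1 (inv_le_one_of_one_le₀ hm1))
  rw [hexp]
  calc |iteratedDeriv (m + 1) f z / ((m + 1) ! * deriv f z)| ^ (m : ℝ)⁻¹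
      ≤ (C * B ^ m) ^ (m : ℝ)⁻¹ := rpow_le_rpow (abs_nonneg _) (h _ hk) (by positivity)
    _ = C ^ (m : ℝ)⁻¹ * B := by rw [mul_rpow hC (by positivity), pow_rpow_inv_natCast hB hm]
    _ ≤ B * max 1 C := by rw [mul_comm]; gcongr

theorem hasDerivAt_fhk (g L x : ℝ) : HasDerivAt (fhk g L) (1 - g * (√(1 + x ^ 2))⁻¹) x :=
  (((hasDerivAt_id x).sub ((hasDerivAt_arsinh x).const_mul g)).sub_const L)

theorem deriv_fhk (g L : ℝ) : deriv (fhk g L) = fun x => 1 - g * deriv arsinh x :=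
  funext fun x => by rw [(hasDerivAt_fhk g L x).deriv, (hasDerivAt_arsinh x).deriv]

theorem iteratedDeriv_fhk (g L : ℝ) {k : ℕ} (hk : 2 ≤ k) (z : ℝ) :
    iteratedDeriv k (fhk g L) z = -(g * iteratedDeriv k arsinh z) := by
  obtain ⟨m, rfl⟩ : ∃ m, k = m + 1 + 1 := ⟨k - 2, by omega⟩
  rw [iteratedDeriv_succ', deriv_fhk, iteratedDeriv_const_sub m.succ_pos, Pi.neg_def,
    iteratedDeriv_fun_neg, iteratedDeriv_const_mul_field, ← iteratedDeriv_succ']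

theorem deriv_fhk_pos {g L z : ℝ} (hg : g ≤ 1) (h : g < 1 ∨ z ≠ 0) : 0 < deriv (fhk g L) z := by
  rw [(hasDerivAt_fhk g L z).deriv, sub_pos]
  have hs : 1 ≤ √(1 + z ^ 2) := one_le_sqrt.mpr (by nlinarith)
  have hinv : (√(1 + z ^ 2))⁻¹ ≤ 1 := inv_le_one_of_one_le₀ hs
  have hinv_pos : 0 < (√(1 + z ^ 2))⁻¹ := by positivity
  rcases h with hg1 | hz
  · nlinarith
  · have hz2 : 0 < z ^ 2 := by positivity
    have : (√(1 + z ^ 2))⁻¹ < 1 := inv_lt_one_of_one_lt₀ (lt_sqrt zero_le_one |>.mpr (by simpa))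
    nlinarith

theorem exists_fhk_eq_zero {g L : ℝ} (hg : g ≤ 1) (hL : 0 ≤ L) : ∃ z, fhk g L z = 0 := by
  -- `f (sinh t) = sinh t - g t - L ≥ t² / 4 - t / 2 - L`, which is `L² ≥ 0` at `t = 2 (L + 1)`.
  set t := 2 * (L + 1)
  have ht : 0 ≤ t := by positivity
  have hsinh : t + t ^ 2 / 2 ≤ 2 * sinh t := by
    rw [sinh_eq]
    nlinarith [quadratic_le_exp_of_nonneg ht, exp_le_one_iff.mpr (neg_nonpos.mpr ht)]
  have hpos : 0 ≤ fhk g L (sinh t) := by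
    simp only [fhk, arsinh_sinh]
    nlinarith
  have hneg : fhk g L 0 ≤ 0 := by simp [fhk, hL]
  have hcont : Continuous (fhk g L) :=
    continuous_iff_continuousAt.mpr fun x => (hasDerivAt_fhk g L x).continuousAt
  obtain ⟨z, -, hz⟩ :=
    intermediate_value_Icc (sinh_nonneg_iff.mpr ht) hcont.continuousOn ⟨hneg, hpos⟩
  exact ⟨z, hz⟩

theorem alpha0_pos : 0 < alpha0 := by
  have h : √2 < 3 / 2 := (sqrt_lt' (by norm_num)).mpr (by norm_num)
  unfold alpha0
  linarith

-- No hypothesis on `deriv (fhk g L) z`: where it vanishes, `x / 0 = 0` makes both sides `0`.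
theorem alphaFn_fhk_le {g L z C B : ℝ} (hC : 0 ≤ C) (hB : 0 ≤ B)
    (harsinh : ∀ k, |iteratedDeriv k arsinh z / k !| ≤ C * B ^ k) :
    alphaFn (fhk g L) z ≤
      |fhk g L z / deriv (fhk g L) z| * (B * max 1 (|g| * C * B / |deriv (fhk g L) z|)) := by
  refine mul_le_mul_of_nonneg_left (gammaFn_le_of_forall_le (by positivity) hB fun k hk => ?_)
    (abs_nonneg _)
  obtain ⟨m, rfl⟩ : ∃ m, k = m + 1 := ⟨k - 1, by omega⟩
  set D := deriv (fhk g L) z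
  have hsplit : iteratedDeriv (m + 1) (fhk g L) z / ((m + 1) ! * D) =
      -(g / D) * (iteratedDeriv (m + 1) arsinh z / (m + 1) !) := by
    rw [iteratedDeriv_fhk g L hk]; ring
  calc |iteratedDeriv (m + 1) (fhk g L) z / ((m + 1) ! * D)|
      = |g| / |D| * |iteratedDeriv (m + 1) arsinh z / (m + 1) !| := by
        rw [hsplit, abs_mul, abs_neg, abs_div]
    _ ≤ |g| / |D| * (C * B ^ (m + 1)) := by gcongr; exact harsinh _
    _ = |g| * C * B / |D| * B ^ (m + 1 - 1) := by rw [Nat.add_sub_cancel, pow_succ]; ring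

theorem exists_eventually_approxZero_fhk {g₀ L₀ : ℝ} (hg : g₀ ≤ 1) (hL : 0 ≤ L₀)
    (hgL : g₀ < 1 ∨ 0 < L₀) :
    ∃ z, ∀ᶠ p : ℝ × ℝ in 𝓝 (g₀, L₀), ApproxZero (fhk p.1 p.2) z := by
  obtain ⟨z, hz⟩ := exists_fhk_eq_zero hg hL
  have hz0 : g₀ < 1 ∨ z ≠ 0 := hgL.imp_right fun hL₀ hz0 => by
    simp only [fhk, hz0, arsinh_zero] at hz; linarith
  have hD : deriv (fhk g₀ L₀) z ≠ 0 := (deriv_fhk_pos hg hz0).ne'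
  obtain ⟨C, B, hC, hB, harsinh⟩ :=
    (analyticAt_arsinh (x := z)).exists_norm_iteratedDeriv_div_factorial_le
  set Φ : ℝ × ℝ → ℝ := fun p => |fhk p.1 p.2 z / deriv (fhk p.1 p.2) z| *
    (B * max 1 (|p.1| * C * B / |deriv (fhk p.1 p.2) z|))
  have hΦ : ContinuousAt Φ (g₀, L₀) := by
    simp only [Φ, fhk, deriv_fhk] at hD ⊢
    fun_prop (disch := simpa using hD)
  have hΦ0 : Φ (g₀, L₀) < alpha0 := by simpa [Φ, hz] using alpha0_pos
  exact ⟨z, (hΦ.eventually_lt continuousAt_const hΦ0).mono fun p hp =>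
    (alphaFn_fhk_le hC.le hB.le harsinh).trans_lt hp⟩

theorem piecewise_constant_starter_general (ε Lmax : ℝ) (hε0 : 0 < ε) (hε : ε < 1 / 4) :
    ∃ S : ℝ × ℝ → ℝ,
      (S '' ((Set.Ioo (0 : ℝ) 1 ×ˢ Set.Icc (0 : ℝ) Lmax) \
        (Set.Ioo (1 - ε) 1 ×ˢ
          Set.Icc (0 : ℝ) (Real.sqrt 3 * alpha0 * ε ^ ((3 : ℝ) / 2) / (1 - ε) ^ ((1 : ℝ) / 2))))).Finite ∧
      ∀ p ∈ (Set.Ioo (0 : ℝ) 1 ×ˢ Set.Icc (0 : ℝ) Lmax) \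
        (Set.Ioo (1 - ε) 1 ×ˢ
          Set.Icc (0 : ℝ) (Real.sqrt 3 * alpha0 * ε ^ ((3 : ℝ) / 2) / (1 - ε) ^ ((1 : ℝ) / 2))),
        ApproxZero (fhk p.1 p.2) (S p) := by
  set ε' := √3 * alpha0 * ε ^ ((3 : ℝ) / 2) / (1 - ε) ^ ((1 : ℝ) / 2)
  have hε' : 0 < ε' := by
    have := alpha0_pos
    have := rpow_pos_of_pos hε0 ((3 : ℝ) / 2)
    have := rpow_pos_of_pos (show 0 < 1 - ε by linarith) ((1 : ℝ) / 2)
    positivity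
  set K := (Icc (0 : ℝ) 1 ×ˢ Icc 0 Lmax) \ (Ioi (1 - ε) ×ˢ Iio ε')
  have hsubset : (Ioo (0 : ℝ) 1 ×ˢ Icc 0 Lmax) \ (Ioo (1 - ε) 1 ×ˢ Icc 0 ε') ⊆ K := by
    rintro ⟨g, L⟩ ⟨⟨⟨hg0, hg1⟩, hL⟩, hout⟩
    exact ⟨⟨⟨hg0.le, hg1.le⟩, hL⟩, fun ⟨hg, hL'⟩ => hout ⟨⟨hg, hg1⟩, hL.1, hL'.le⟩⟩
  have hK : IsCompact K := (isCompact_Icc.prod isCompact_Icc).diff (isOpen_Ioi.prod isOpen_Iio)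
  obtain ⟨S, hfin, hS⟩ := hK.exists_finite_image_of_locally fun p ⟨⟨⟨_, hg1⟩, hL, _⟩, hout⟩ =>
    exists_eventually_approxZero_fhk hg1 hL <| by
      by_contra! h
      exact hout ⟨show 1 - ε < p.1 by linarith, show p.2 < ε' by linarith⟩
  exact ⟨S, hfin.subset (image_mono hsubset), fun p hp => hS p (hsubset hp)⟩

/-- Theorem 1.4: for any `0 < ε < 1/4` and `L_max > ε' = √3·α₀·ε^{3/2}/(1-ε)^{1/2}`,
there is a piecewise constant (finitely-valued) function `S̃` on
`R = (0,1)×[0,L_max] \ (1-ε,1)×[0,ε']` that is an approximate zero of `f_{g,L}`. -/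
theorem piecewise_constant_starter (ε Lmax : ℝ) (hε0 : 0 < ε) (hε : ε < 1 / 4)
    (hL : Lmax > Real.sqrt 3 * alpha0 * ε ^ ((3 : ℝ) / 2) / (1 - ε) ^ ((1 : ℝ) / 2)) :
    ∃ S : ℝ × ℝ → ℝ,
      (S '' ((Set.Ioo (0 : ℝ) 1 ×ˢ Set.Icc (0 : ℝ) Lmax) \
        (Set.Ioo (1 - ε) 1 ×ˢ
          Set.Icc (0 : ℝ) (Real.sqrt 3 * alpha0 * ε ^ ((3 : ℝ) / 2) / (1 - ε) ^ ((1 : ℝ) / 2))))).Finite ∧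
      ∀ p ∈ (Set.Ioo (0 : ℝ) 1 ×ˢ Set.Icc (0 : ℝ) Lmax) \
        (Set.Ioo (1 - ε) 1 ×ˢ
          Set.Icc (0 : ℝ) (Real.sqrt 3 * alpha0 * ε ^ ((3 : ℝ) / 2) / (1 - ε) ^ ((1 : ℝ) / 2))),
        ApproxZero (fhk p.1 p.2) (S p) :=
  piecewise_constant_starter_general ε Lmax hε0 hε
end
end

section
/- For every integer k ≥ 1, the polynomial P_k has degree k−1 and its leading coefficient (the coefficient of X^{k−1}) equals (−1)^{k−1}·(k−1)!. -/
noncomputable section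

open Polynomial

/-- The polynomials `P_k` defined by `P₁ = 1` and
`P_{k+1}(X) = (1-2k)·X·P_k(X) + (1+X²)·P_k'(X)` for `k ≥ 1`. -/
def P : ℕ → Polynomial ℝ
  | 0 => 0
  | 1 => 1
  | (k + 2) => C (1 - 2 * ((k : ℝ) + 1)) * X * P (k + 1)
      + (1 + X ^ 2) * derivative (P (k + 1))

/-!
Write `P_{k+1} = derivStep (1 - 2k) P_k` with `derivStep c Q = c·X·Q + (1 + X²)·Q'`. The
coefficient of `X^(m+1)` in `derivStep c Q` is `(c + m)·Q_m + (m + 2)·Q_(m+2)`, so `derivStep c`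
raises the degree by at most one and, when `deg Q ≤ n`, turns the coefficient `Q_n` into the
coefficient `(c + n)·Q_n` of `X^(n+1)`. Along the recurrence this factor is `(1 - 2k) + (k - 1) = -k`, which produces
`(-1)^(k-1)·(k-1)!`; being nonzero, it also pins the degree.
-/

namespace Polynomial

variable {R : Type*} [CommSemiring R]

def derivStep (c : R) (Q : R[X]) : R[X] :=
  C c * X * Q + (1 + X ^ 2) * derivative Q

theorem coeff_derivStep_succ (c : R) (Q : R[X]) (m : ℕ) :
    (derivStep c Q).coeff (m + 1) = (c + m) * Q.coeff m + (m + 2) * Q.coeff (m + 2) := by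
  have hX2 : (X ^ 2 * derivative Q).coeff (m + 1) = m * Q.coeff m := by
    rcases m with _ | m
    · simp [coeff_X_pow_mul']
    · rw [show m + 1 + 1 = m + 2 by ring, coeff_X_pow_mul, coeff_derivative]
      push_cast
      ring
  simp only [derivStep, add_mul, one_mul, coeff_add, mul_assoc, coeff_C_mul, coeff_X_mul, hX2,
    coeff_derivative]
  push_cast
  ring

variable {c : R} {Q : R[X]} {n : ℕ}

theorem natDegree_derivStep_le (hQ : Q.natDegree ≤ n) : (derivStep c Q).natDegree ≤ n + 1 := by
  rw [natDegree_le_iff_coeff_eq_zero] at hQ ⊢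
  intro N hN
  obtain ⟨m, rfl⟩ : ∃ m, N = m + 1 := ⟨N - 1, by omega⟩
  rw [coeff_derivStep_succ, hQ m (by omega), hQ (m + 2) (by omega), mul_zero, mul_zero, add_zero]

theorem coeff_derivStep_of_natDegree_le (hQ : Q.natDegree ≤ n) :
    (derivStep c Q).coeff (n + 1) = (c + n) * Q.coeff n := by
  rw [coeff_derivStep_succ, coeff_eq_zero_of_natDegree_lt (n := n + 2) (by omega), mul_zero,
    add_zero]

end Polynomial

theorem P_add_two (k : ℕ) : P (k + 2) = derivStep (1 - 2 * ((k : ℝ) + 1)) (P (k + 1)) := rfl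

theorem natDegree_P_succ_le (k : ℕ) : (P (k + 1)).natDegree ≤ k := by
  induction k with
  | zero => simp [P]
  | succ k ih => exact P_add_two k ▸ natDegree_derivStep_le ih

theorem coeff_P_succ (k : ℕ) : (P (k + 1)).coeff k = (-1 : ℝ) ^ k * k.factorial := by
  induction k with
  | zero => simp [P]
  | succ k ih =>
    rw [P_add_two, coeff_derivStep_of_natDegree_le (natDegree_P_succ_le k), ih,
      Nat.factorial_succ]
    push_cast
    ring

theorem degree_P_succ (k : ℕ) : (P (k + 1)).degree = k :=
  degree_eq_of_le_of_coeff_ne_zero (degree_le_of_natDegree_le (natDegree_P_succ_le k))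
    (by rw [coeff_P_succ]; exact mul_ne_zero (by simp) (by positivity))

/-- Lemma 2.1: `P_k` has degree `k-1` with leading coefficient `(-1)^{k-1}·(k-1)!`. -/
theorem P_degree_leadingCoeff (k : ℕ) (hk : 1 ≤ k) :
    (P k).degree = (k - 1 : ℕ) ∧
      (P k).coeff (k - 1) = (-1 : ℝ) ^ (k - 1) * (Nat.factorial (k - 1) : ℝ) := by
  obtain ⟨m, rfl⟩ : ∃ m, k = m + 1 := ⟨k - 1, by omega⟩
  exact ⟨degree_P_succ m, coeff_P_succ m⟩
end
end

section
/- For every integer k ≥ 1, the polynomial P_k contains only monomials of degree congruent to k−1 modulo 2 (i.e., the coefficient of X^m in P_k is zero whenever m − (k−1) is odd), and its coefficients alternate in sign: for every integer j ≥ 0, the coefficient of X^{k−1−2j} in P_k multiplied by (−1)^{k−1+j} is nonnegative. -/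
/-!
Comparing coefficients in the recurrence: if `a_m` are the coefficients of `P_{k+1}`, then
`[X^0] P_{k+2} = a_1` and `[X^{m+1}] P_{k+2} = (m - 2k - 1) a_m + (m + 2) a_{m+2}`.
Each coefficient of `P_{k+2}` thus involves only coefficients of `P_{k+1}` of the other parity,
and the twisted coefficients `b_j = (-1)^(k+j) a_{k-2j}` obey a recurrence with nonnegative
weights, `b'_j = (k + 2j + 1) b_j + (k - 2j + 2) b_{j-1}`, where `b_{-1} = a_{k+2} = 0` because
`P_{k+1}` has degree at most `k`.
-/

noncomputable section

open Polynomial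

namespace P

theorem add_two (k : ℕ) :
    P (k + 2) = C (1 - 2 * ((k : ℝ) + 1)) * X * P (k + 1)
      + (1 + X ^ 2) * derivative (P (k + 1)) := rfl

theorem one : P 1 = 1 := rfl

theorem coeff_add_two_zero (k : ℕ) : (P (k + 2)).coeff 0 = (P (k + 1)).coeff 1 := by
  simp [add_two, coeff_derivative]

theorem coeff_add_two_succ (k m : ℕ) :
    (P (k + 2)).coeff (m + 1) =
      ((m : ℝ) - 2 * k - 1) * (P (k + 1)).coeff m + (m + 2) * (P (k + 1)).coeff (m + 2) := by
  rw [add_two, coeff_add, mul_assoc, coeff_C_mul, coeff_X_mul, add_mul, one_mul, coeff_add,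
    coeff_derivative]
  cases m with
  | zero => simp [mul_comm (X ^ 2), coeff_mul_X_pow']; ring
  | succ n =>
    rw [show n + 1 + 1 = n + 2 from rfl, coeff_X_pow_mul', if_pos (by omega),
      Nat.add_sub_cancel, coeff_derivative]
    push_cast; ring

theorem coeff_succ_eq_zero_of_lt {k m : ℕ} (h : k < m) : (P (k + 1)).coeff m = 0 := by
  induction k generalizing m with
  | zero => rw [one, coeff_one, if_neg (by omega)]
  | succ k ih =>
    obtain ⟨n, rfl⟩ : ∃ n, m = n + 1 := ⟨m - 1, by omega⟩
    rw [coeff_add_two_succ, ih (by omega), ih (by omega), mul_zero, mul_zero, add_zero]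

theorem coeff_succ_eq_zero_of_mod_two_ne {k m : ℕ} (h : m % 2 ≠ k % 2) :
    (P (k + 1)).coeff m = 0 := by
  induction k generalizing m with
  | zero => rw [one, coeff_one, if_neg (by omega)]
  | succ k ih =>
    cases m with
    | zero => rw [coeff_add_two_zero, ih (by omega)]
    | succ n => rw [coeff_add_two_succ, ih (by omega), ih (by omega), mul_zero, mul_zero, add_zero]

theorem neg_one_pow_mul_coeff_succ_nonneg {k m j : ℕ} (h : m + 2 * j = k) :
    0 ≤ (-1 : ℝ) ^ (k + j) * (P (k + 1)).coeff m := by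
  induction k generalizing m j with
  | zero =>
    obtain ⟨rfl, rfl⟩ : m = 0 ∧ j = 0 := by omega
    simp [one]
  | succ k ih =>
    cases m with
    | zero =>
      obtain ⟨i, rfl⟩ : ∃ i, j = i + 1 := ⟨j - 1, by omega⟩
      rw [coeff_add_two_zero, show k + 1 + (i + 1) = k + i + 2 by omega, pow_add, neg_one_sq,
        mul_one]
      exact ih (by omega)
    | succ n =>
      have ha := ih (m := n) (j := j) (by omega)
      have hb : 0 ≤ (-1 : ℝ) ^ (k + 1 + j) * (P (k + 1)).coeff (n + 2) := by
        cases j with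
        | zero => rw [coeff_succ_eq_zero_of_lt (by omega), mul_zero]
        | succ i =>
          rw [show k + 1 + (i + 1) = k + i + 2 by omega, pow_add, neg_one_sq, mul_one]
          exact ih (by omega)
      obtain rfl : k = n + 2 * j := by omega
      have hweights : (-1 : ℝ) ^ (n + 2 * j + 1 + j) * (P (n + 2 * j + 2)).coeff (n + 1)
          = (n + 4 * j + 1) * ((-1) ^ (n + 2 * j + j) * (P (n + 2 * j + 1)).coeff n)
            + (n + 2) * ((-1) ^ (n + 2 * j + 1 + j) * (P (n + 2 * j + 1)).coeff (n + 2)) := by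
        rw [coeff_add_two_succ]; push_cast; ring
      rw [hweights]
      exact add_nonneg (mul_nonneg (by positivity) ha) (mul_nonneg (by positivity) hb)

end P

theorem P_parity_and_alternating_signs_general (k : ℕ) :
    (∀ m : ℕ, m % 2 ≠ (k - 1) % 2 → (P k).coeff m = 0) ∧
      (∀ j : ℕ, 2 * j ≤ k - 1 →
        0 ≤ (-1 : ℝ) ^ (k - 1 + j) * (P k).coeff (k - 1 - 2 * j)) := by
  cases k with
  | zero => simp [P]
  | succ k =>
    simp only [Nat.add_sub_cancel]
    exact ⟨fun m => P.coeff_succ_eq_zero_of_mod_two_ne,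
      fun j hj => P.neg_one_pow_mul_coeff_succ_nonneg (Nat.sub_add_cancel hj)⟩

/-- Lemma 2.1: the monomials of `P_k` all have degree congruent to `k-1` mod `2`,
and the coefficients alternate in sign:
`(-1)^{k-1+j}·(coefficient of X^{k-1-2j}) ≥ 0` for all `j` with `2j ≤ k-1`. -/
theorem P_parity_and_alternating_signs (k : ℕ) (hk : 1 ≤ k) :
    (∀ m : ℕ, m % 2 ≠ (k - 1) % 2 → (P k).coeff m = 0) ∧
      (∀ j : ℕ, 2 * j ≤ k - 1 →
        0 ≤ (-1 : ℝ) ^ (k - 1 + j) * (P k).coeff (k - 1 - 2 * j)) :=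
  P_parity_and_alternating_signs_general k
end
end

section
/- For every real number x ≠ 0 and every integer n ≥ 2, the supremum over integers k ≥ n of |x/k|^{1/(k−1)} equals max{1, |x/n|^{1/(n−1)}}. -/
open Real Filter Topology

/-! For `k ≤ |x|` the base `|x|/k` is at least `1` and decreases in `k`, while the exponent
`1/(k-1)` decreases too, so the term is at most the `k = n` term; for `k > |x|` the term is
at most `1`. Conversely the terms tend to `1`, since `log (|x|/k) / (k-1) → 0`. -/

theorem div_rpow_one_div_sub_one_le_max {a n k : ℝ} (ha : 0 ≤ a) (hn : 1 < n) (hnk : n ≤ k) :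
    (a / k) ^ (1 / (k - 1)) ≤ max 1 ((a / n) ^ (1 / (n - 1))) := by
  have hk : 0 < k := by linarith
  have hexp : 0 ≤ 1 / (k - 1) := by
    have : 0 < k - 1 := by linarith
    positivity
  rcases le_or_gt a k with hak | hka
  · exact le_max_of_le_left <|
      rpow_le_one (by positivity) (div_le_one_of_le₀ hak hk.le) hexp
  · refine le_max_of_le_right ?_
    calc (a / k) ^ (1 / (k - 1))
        ≤ (a / n) ^ (1 / (k - 1)) :=
          rpow_le_rpow (by positivity) (div_le_div_of_nonneg_left ha (by linarith) hnk) hexp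
      _ ≤ (a / n) ^ (1 / (n - 1)) := by
          refine rpow_le_rpow_of_exponent_le ?_ ?_
          · rw [one_le_div (by linarith)]
            linarith
          · exact one_div_le_one_div_of_le (by linarith) (by linarith)

theorem tendsto_div_rpow_one_div_sub_one {c : ℝ} (hc : 0 < c) :
    Tendsto (fun t : ℝ => (c / t) ^ (1 / (t - 1))) atTop (𝓝 1) := by
  have hlog : Tendsto (fun t => (log c - log t) / (t - 1)) atTop (𝓝 0) := by
    have hconst : Tendsto (fun t => log c / (t - 1)) atTop (𝓝 0) :=
      tendsto_const_nhds.div_atTop (tendsto_atTop_add_const_right _ _ tendsto_id)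
    have hlog_div : Tendsto (fun t => log t / (t - 1)) atTop (𝓝 0) := by
      simpa [sub_eq_add_neg] using tendsto_pow_log_div_mul_add_atTop 1 (-1) 1 one_ne_zero
    simpa [sub_div] using hconst.sub hlog_div
  have hexp := (continuous_exp.tendsto 0).comp hlog
  rw [exp_zero] at hexp
  refine hexp.congr' ?_
  filter_upwards [eventually_gt_atTop 0] with t ht
  rw [Function.comp_apply, rpow_def_of_pos (div_pos hc ht), log_div hc.ne' ht.ne', mul_one_div]

/-- Lemma 2.2: for `x ≠ 0` and integer `n ≥ 2`,
`sup_{k ≥ n} |x/k|^{1/(k-1)} = max{1, |x/n|^{1/(n-1)}}`. -/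
theorem sup_abs_rpow (x : ℝ) (hx : x ≠ 0) (n : ℕ) (hn : 2 ≤ n) :
    sSup {y : ℝ | ∃ k : ℕ, n ≤ k ∧ y = |x / (k : ℝ)| ^ ((1 : ℝ) / ((k : ℝ) - 1))} =
      max 1 (|x / (n : ℝ)| ^ ((1 : ℝ) / ((n : ℝ) - 1))) := by
  simp only [abs_div, Nat.abs_cast]
  set S := {y : ℝ | ∃ k : ℕ, n ≤ k ∧ y = (|x| / k) ^ ((1 : ℝ) / (k - 1))}
  have hn1 : (1 : ℝ) < n := by exact_mod_cast hn
  have hub : ∀ y ∈ S, y ≤ max 1 ((|x| / n) ^ ((1 : ℝ) / (n - 1))) := by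
    rintro _ ⟨k, hk, rfl⟩
    exact div_rpow_one_div_sub_one_le_max (abs_nonneg x) hn1 (by exact_mod_cast hk)
  have hbdd : BddAbove S := ⟨_, hub⟩
  refine le_antisymm (csSup_le ⟨_, n, le_rfl, rfl⟩ hub)
    (max_le ?_ (le_csSup hbdd ⟨n, le_rfl, rfl⟩))
  refine le_of_tendsto
    ((tendsto_div_rpow_one_div_sub_one (abs_pos.2 hx)).comp tendsto_natCast_atTop_atTop) ?_
  filter_upwards [eventually_ge_atTop n] with k hk
  exact le_csSup hbdd ⟨k, hk, rfl⟩
end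

section
/- For every real s with 0 < s ≤ 1, the inequality ((arcsinh(s) − s + s³/6) / (√(1+s²)·(√(1+s²) − 1))) · max{2, 2/(√3·(√(1+s²) − 1)^{1/2})} < 3 − 2√2 holds. -/
/-!
Write `a(s) = arsinh s - s + s³/6` and `u = √(1 + s²)`. The maximum equals `2` exactly when
`3(u - 1) ≥ 1`, i.e. `s² ≥ 7/9`.

For `s² ≤ 7/9`, comparing derivatives with a truncated binomial series of `1/√(1 + t²)` gives
`a(s) ≤ 3s⁵/40 - s⁷/42`, and `√(u - 1) · √(u + 1) = s` reduces the claim to a polynomial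
inequality.

For `7/9 ≤ s² ≤ 1` the series is too weak near `s = 1`. There `a' ≥ 0.138`, so
`a(s) ≤ a(1) - 0.138 (1 - s)`, and `a(1) = arsinh 1 - 5/6` is controlled through
`4 arsinh 1 = log (17 + 12√2) = 5 log 2 + log ((17 + 12√2)/32)` and `log x ≤ x - 1`.
-/

open Real Set

lemma mul_sub_le_sub_of_le_hasDerivAt {f f' : ℝ → ℝ} {C x y : ℝ}
    (hf : ∀ t, HasDerivAt f (f' t) t) (hC : ∀ t ∈ Ioo x y, C ≤ f' t) (hxy : x ≤ y) :
    C * (y - x) ≤ f y - f x := by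
  refine (convex_Icc x y).mul_sub_le_image_sub_of_le_deriv
    (fun t _ => (hf t).continuousAt.continuousWithinAt)
    (fun t _ => (hf t).differentiableAt.differentiableWithinAt) ?_
    x ⟨le_rfl, hxy⟩ y ⟨hxy, le_rfl⟩ hxy
  intro t ht
  rw [interior_Icc] at ht
  rw [(hf t).deriv]
  exact hC t ht

lemma inv_sqrt_le_of_one_le_sq_mul {p y : ℝ} (hp : 0 ≤ p) (hy : 0 < y) (h : 1 ≤ p ^ 2 * y) :
    (√y)⁻¹ ≤ p := by
  rwa [← Real.sqrt_inv, Real.sqrt_le_left hp, inv_le_iff_one_le_mul₀ hy]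

lemma le_inv_sqrt_of_sq_mul_le {p y : ℝ} (hy : 0 < y) (h : p ^ 2 * y ≤ 1) : p ≤ (√y)⁻¹ := by
  rw [← Real.sqrt_inv]
  exact Real.le_sqrt_of_sq_le (by rwa [← one_div, le_div_iff₀ hy])

-- The polynomial is the binomial series of `(1 + y) ^ (-1/2)` up to degree 2, with `-y ^ 3 / 6`
-- in place of `-5 * y ^ 3 / 16`; integrating it in `y = t ^ 2` gives the coefficients `3/40, 1/42`.
lemma one_le_sq_mul_one_add {y : ℝ} (hy0 : 0 ≤ y) (hy1 : y ≤ 1) :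
    1 ≤ (1 - y / 2 + 3 * y ^ 2 / 8 - y ^ 3 / 6) ^ 2 * (1 + y) := by
  have h : 0 ≤ 166 - 65 * y + 40 * y ^ 2 - 16 * y ^ 3 := by
    nlinarith [pow_le_one₀ hy0 hy1 (n := 3)]
  nlinarith [mul_nonneg (mul_nonneg (pow_nonneg hy0 3) (sub_nonneg.2 hy1)) h, pow_nonneg hy0 3]

lemma inv_sqrt_one_add_sq_le {x : ℝ} (hx0 : 0 ≤ x) (hx1 : x ≤ 1) :
    (√(1 + x ^ 2))⁻¹ ≤ 1 - x ^ 2 / 2 + 3 * x ^ 4 / 8 - x ^ 6 / 6 := by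
  have hy1 : x ^ 2 ≤ 1 := pow_le_one₀ hx0 hx1
  apply inv_sqrt_le_of_one_le_sq_mul _ (by positivity)
  · convert one_le_sq_mul_one_add (sq_nonneg x) hy1 using 3; ring
  · nlinarith [pow_le_pow_of_le_one (sq_nonneg x) hy1 (by norm_num : 2 ≤ 3)]

lemma le_inv_sqrt_one_add_sq {x : ℝ} (h : 7 / 9 ≤ x ^ 2) (h1 : x ^ 2 ≤ 1) :
    1.138 - x ^ 2 / 2 ≤ (√(1 + x ^ 2))⁻¹ :=
  le_inv_sqrt_of_sq_mul_le (by positivity) (by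
    nlinarith [sq_nonneg (x ^ 2 - 7 / 9), mul_nonneg (sub_nonneg.2 h) (sub_nonneg.2 h1)])

lemma hasDerivAt_arsinh_sub_add_cube (x : ℝ) :
    HasDerivAt (fun t => arsinh t - t + t ^ 3 / 6) ((√(1 + x ^ 2))⁻¹ - 1 + x ^ 2 / 2) x := by
  refine (((hasDerivAt_arsinh x).fun_sub (hasDerivAt_id' x)).fun_add
    ((hasDerivAt_pow 3 x).div_const 6)).congr_deriv ?_
  push_cast; ring

lemma hasDerivAt_quintic_sub_septic (x : ℝ) :
    HasDerivAt (fun t : ℝ => 3 * t ^ 5 / 40 - t ^ 7 / 42) (3 * x ^ 4 / 8 - x ^ 6 / 6) x := by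
  refine ((((hasDerivAt_pow 5 x).const_mul 3).div_const 40).fun_sub
    ((hasDerivAt_pow 7 x).div_const 42)).congr_deriv ?_
  push_cast; ring

lemma arsinh_sub_add_cube_le {s : ℝ} (hs0 : 0 ≤ s) (hs1 : s ≤ 1) :
    arsinh s - s + s ^ 3 / 6 ≤ 3 * s ^ 5 / 40 - s ^ 7 / 42 := by
  have h := mul_sub_le_sub_of_le_hasDerivAt (C := 0)
    (fun t => (hasDerivAt_quintic_sub_septic t).sub (hasDerivAt_arsinh_sub_add_cube t))
    (fun t ht => by linarith [inv_sqrt_one_add_sq_le ht.1.le (ht.2.trans_le hs1).le]) hs0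
  simpa using h

-- `0.138` is just below `5/36`, the derivative `1/√(1 + t²) - 1 + t²/2` at `t² = 7/9`.
lemma arsinh_sub_add_cube_le_of_seven_ninths_le_sq {s : ℝ} (hs0 : 0 ≤ s) (hs : 7 / 9 ≤ s ^ 2)
    (hs1 : s ≤ 1) : arsinh s - s + s ^ 3 / 6 ≤ arsinh 1 - 5 / 6 - 0.138 * (1 - s) := by
  have hderiv (t : ℝ) (ht : t ∈ Ioo s 1) : 0.138 ≤ (√(1 + t ^ 2))⁻¹ - 1 + t ^ 2 / 2 := by
    have := le_inv_sqrt_one_add_sq (x := t) (by nlinarith [ht.1]) (by nlinarith [ht.1, ht.2])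
    linarith
  have h := mul_sub_le_sub_of_le_hasDerivAt hasDerivAt_arsinh_sub_add_cube hderiv hs1
  norm_num at h ⊢
  linarith

lemma sqrt_two_lt : √2 < 1.4142136 := (Real.sqrt_lt' (by norm_num)).2 (by norm_num)

lemma arsinh_one_lt : arsinh 1 < 0.882 := by
  have hpos : 0 < (17 + 12 * √2) / 32 := by positivity
  have hpow : (1 + √2) ^ 4 = 2 ^ 5 * ((17 + 12 * √2) / 32) := by
    linear_combination (√2 ^ 2 + 4 * √2 + 8) * Real.sq_sqrt (zero_le_two : (0 : ℝ) ≤ 2)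
  have hlog : 4 * arsinh 1 = 5 * log 2 + log ((17 + 12 * √2) / 32) := by
    have h4 : 4 * log (1 + √2) = log ((1 + √2) ^ 4) := by rw [Real.log_pow]; norm_num
    rw [arsinh, one_pow, one_add_one_eq_two, h4, hpow, Real.log_mul (by norm_num) hpos.ne',
      Real.log_pow]
    norm_num
  linarith [Real.log_le_sub_one_of_pos hpos, Real.log_two_lt_d9, sqrt_two_lt]

lemma two_mul_arsinh_sub_add_cube_lt_of_seven_ninths_le_sq {s : ℝ} (hs0 : 0 ≤ s)
    (hs : 7 / 9 ≤ s ^ 2) (hs1 : s ≤ 1) :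
    2 * (arsinh s - s + s ^ 3 / 6) < (3 - 2 * √2) * (√(1 + s ^ 2) * (√(1 + s ^ 2) - 1)) := by
  have hu2 : √(1 + s ^ 2) ^ 2 = 1 + s ^ 2 := Real.sq_sqrt (by positivity)
  have hu : √(1 + s ^ 2) ≤ 1.4142136 := (Real.sqrt_le_left (by norm_num)).2 (by nlinarith)
  have ha := arsinh_sub_add_cube_le_of_seven_ninths_le_sq hs0 hs hs1
  have h2 := sqrt_two_lt
  have h1 := arsinh_one_lt
  nlinarith [sq_nonneg (1 - s), sq_nonneg (√(1 + s ^ 2) - 1.4142136)]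

lemma arsinh_sub_add_cube_mul_lt_of_sq_le_seven_ninths {s : ℝ} (hs0 : 0 < s)
    (hs : s ^ 2 ≤ 7 / 9) :
    (arsinh s - s + s ^ 3 / 6) * (2 / (√3 * √(√(1 + s ^ 2) - 1))) <
      (3 - 2 * √2) * (√(1 + s ^ 2) * (√(1 + s ^ 2) - 1)) := by
  set u := √(1 + s ^ 2)
  have hu2 : u ^ 2 = 1 + s ^ 2 := Real.sq_sqrt (by positivity)
  have hu1 : 1 < u := Real.lt_sqrt_of_sq_lt (by nlinarith)
  set v := √(u - 1)
  set w := √(u + 1)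
  have hv2 : v ^ 2 = u - 1 := Real.sq_sqrt (by linarith)
  have hw2 : w ^ 2 = u + 1 := Real.sq_sqrt (by linarith)
  have hv : 0 < v := Real.sqrt_pos.2 (by linarith)
  have hw : 0 < w := Real.sqrt_pos.2 (by linarith)
  have hvw : v * w = s := by
    rw [← Real.sqrt_mul (by linarith), ← Real.sqrt_sq hs0.le]
    congr 1; nlinarith
  have hw_le : w ≤ 1.5276 := (Real.sqrt_le_left (by norm_num)).2 (by nlinarith)
  have h3 : 1.732 ≤ √3 := Real.le_sqrt_of_sq_le (by norm_num)
  have hc : 0.1715728 ≤ 3 - 2 * √2 := by linarith [sqrt_two_lt]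
  set a := arsinh s - s + s ^ 3 / 6
  have ha : a ≤ 3 * s ^ 5 / 40 - s ^ 7 / 42 := arsinh_sub_add_cube_le hs0.le (by nlinarith)
  have hq : 0 ≤ 3 * s ^ 5 / 40 - s ^ 7 / 42 := by
    nlinarith [pow_pos hs0 5, mul_nonneg (pow_pos hs0 5).le (sub_nonneg.2 hs)]
  suffices key : 2 * a * w ^ 3 < (3 - 2 * √2) * √3 * u * s ^ 3 by
    rw [← hvw, mul_pow] at key
    rw [← hv2, mul_div_assoc', div_lt_iff₀ (by positivity)]
    refine (mul_lt_mul_iff_of_pos_right (pow_pos hw 3)).1 ?_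
    linear_combination key
  calc 2 * a * w ^ 3 ≤ 2 * (3 * s ^ 5 / 40 - s ^ 7 / 42) * (1.5276 * (2 * u)) := by
        gcongr
        nlinarith
    _ < 0.1715728 * 1.732 * u * s ^ 3 := by
        have hpoly : 2 * (3 * s ^ 2 / 40 - s ^ 4 / 42) * (2 * 1.5276) < 0.1715728 * 1.732 := by
          nlinarith [sq_nonneg s]
        have := mul_lt_mul_of_pos_right hpoly (mul_pos (hu1.trans' one_pos) (pow_pos hs0 3))
        linarith
    _ ≤ (3 - 2 * √2) * √3 * u * s ^ 3 := by gcongr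

/-- The one-variable inequality used in the proof of Theorem 2.4: for `0 < s ≤ 1`,
`((arcsinh(s) - s + s³/6)/(√(1+s²)(√(1+s²)-1)))·max{2, 2/(√3·(√(1+s²)-1)^{1/2})} < 3 - 2√2`. -/
theorem cubic_alpha_test_inequality (s : ℝ) (hs0 : 0 < s) (hs1 : s ≤ 1) :
    (Real.arsinh s - s + s ^ 3 / 6) /
        (Real.sqrt (1 + s ^ 2) * (Real.sqrt (1 + s ^ 2) - 1)) *
        max 2 (2 / (Real.sqrt 3 * (Real.sqrt (1 + s ^ 2) - 1) ^ ((1 : ℝ) / 2))) <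
      3 - 2 * Real.sqrt 2 := by
  set u := √(1 + s ^ 2)
  have hu2 : u ^ 2 = 1 + s ^ 2 := Real.sq_sqrt (by positivity)
  have hu1 : 1 < u := Real.lt_sqrt_of_sq_lt (by nlinarith)
  have hsqrt : √3 * √(u - 1) = √(3 * (u - 1)) := (Real.sqrt_mul (by norm_num) _).symm
  rw [← Real.sqrt_eq_rpow, div_mul_eq_mul_div, div_lt_iff₀ (by nlinarith)]
  rcases le_total (7 / 9) (s ^ 2) with hs | hs
  · have hmax : 2 / (√3 * √(u - 1)) ≤ 2 := by
      rw [hsqrt, div_le_iff₀ (by positivity), le_mul_iff_one_le_right two_pos,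
        Real.one_le_sqrt]
      nlinarith
    rw [max_eq_left hmax, mul_comm]
    exact two_mul_arsinh_sub_add_cube_lt_of_seven_ninths_le_sq hs0.le hs hs1
  · have hmax : 2 ≤ 2 / (√3 * √(u - 1)) := by
      rw [hsqrt, le_div_iff₀ (Real.sqrt_pos.2 (by linarith)), mul_le_iff_le_one_right two_pos,
        Real.sqrt_le_one]
      nlinarith
    rw [max_eq_right hmax]
    exact arsinh_sub_add_cube_mul_lt_of_sq_le_seven_ninths hs0 hs
end
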